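/- Let k ≥ 1 and t ≥ 2 be integers, and let G be a graph on more than k vertices such that every vertex set W ⊆ V(G) with k/2 ≤ |W| ≤ k has vertex boundary satisfying |∂_v(W)| ≥ t. Then G contains a cycle of length at least t + 1. -/

import Mathlib

open MeasureTheory Filter

noncomputable section

/-- The `d`-dimensional hypercube graph `Q^d`, on vertex set `{0,1}^d`. -/
def cubeGraph (d : ℕ) : SimpleGraph (Fin d → Bool) where
  Adj x y := hammingDist x y = 1
  symm := ⟨fun x y h => by show hammingDist y x = 1; rw [hammingDist_comm]; exact h⟩
  loopless := ⟨fun x h => absurd (show hammingDist x x = 1 from h) (by simp)⟩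

/-- The spanning subgraph of `G` consisting of those edges `e` with `ω e = true`. -/
def percolate {V : Type*} (G : SimpleGraph V) (ω : Sym2 V → Bool) : SimpleGraph V where
  Adj x y := G.Adj x y ∧ ω s(x, y) = true
  symm := ⟨by
    rintro x y ⟨h1, h2⟩
    exact ⟨h1.symm, by rwa [Sym2.eq_swap]⟩⟩
  loopless := ⟨fun x h => G.irrefl h.1⟩

/-- The Bernoulli measure on `Bool` with success probability `p` (truncated to `[0,1]`). -/
def bernoulliBool (p : ℝ) : Measure Bool :=
  (PMF.bernoulli (min (Real.toNNReal p) 1) (min_le_right _ _)).toMeasure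

instance (p : ℝ) : IsProbabilityMeasure (bernoulliBool p) := by
  unfold bernoulliBool; infer_instance

/-- The probability measure on edge-configurations of the `d`-dimensional hypercube in which
each potential edge is retained independently with probability `p`; the configuration space
is `Sym2 (Fin d → Bool) → Bool`, and `Q^d_p` is `percolate (cubeGraph d) ω`. -/
def cubeMeasure (d : ℕ) (p : ℝ) : Measure (Sym2 (Fin d → Bool) → Bool) :=
  Measure.pi fun _ => bernoulliBool p

/-- `C` is a largest connected component of `H`. -/
def IsLargestComponent {V : Type*} [Fintype V] (H : SimpleGraph V)
    (C : H.ConnectedComponent) : Prop :=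
  ∀ C' : H.ConnectedComponent, C'.supp.ncard ≤ C.supp.ncard

/-- The edge boundary of the vertex set `S` in the graph `H`: the set of edges of `H` with
exactly one endpoint in `S`. -/
def edgeBoundary {V : Type*} (H : SimpleGraph V) (S : Set V) : Set (Sym2 V) :=
  {e | e ∈ H.edgeSet ∧ ∃ x y, e = s(x, y) ∧ x ∈ S ∧ y ∉ S}

/-- The vertex boundary of the vertex set `S` in the graph `H`: the set of vertices outside
`S` having a neighbour in `S`. -/
def vertexBoundary {V : Type*} (H : SimpleGraph V) (S : Set V) : Set V :=
  {v | v ∉ S ∧ ∃ u ∈ S, H.Adj u v}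

/-- The survival probability of a Galton–Watson branching process with Poisson(`c`) offspring
distribution: one minus the extinction probability, the extinction probability being the least
fixed point in `[0,1]` of the probability generating function `s ↦ exp (c * (s - 1))` of the
Poisson(`c`) distribution. -/
def poissonSurvival (c : ℝ) : ℝ :=
  1 - sInf {s : ℝ | s ∈ Set.Icc (0 : ℝ) 1 ∧ Real.exp (c * (s - 1)) = s}

/-- `H` contains a complete minor of order `t`: there are `t` pairwise disjoint connected
branch sets with an edge of `H` between any two of them. -/
def HasCompleteMinor {V : Type*} (H : SimpleGraph V) (t : ℕ) : Prop :=
  ∃ B : Fin t → Set V,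
    (∀ i, (H.induce (B i)).Connected) ∧
    (Pairwise fun i j => Disjoint (B i) (B j)) ∧
    (∀ i j, i ≠ j → ∃ x ∈ B i, ∃ y ∈ B j, H.Adj x y)

/-!
Some component of `G` has more than `k` vertices: otherwise a union of components would have between
`k/2` and `k` vertices and no boundary. Rooted at a vertex `r` of it, keep a path `P` from `r` to a
vertex `x` together with a set `W` hanging off `x`: `W` avoids `P`, every vertex of `W` reaches `x`
inside `W ∪ {x}`, and every neighbour of `W` outside `W` lies on `P`. If a component of `W` has more
than `k` vertices, it contains a neighbour `y` of `x`; extend `P` to `y` and continue with that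
component minus `y`. Otherwise some union `U` of components of `W` has between `k/2` and `k`
vertices, so at least `t` boundary vertices, all on `P`. The boundary vertex `a` met first along `P`
is adjacent to some `u ∈ U`; the walk `a → u ⇝ x` through `U`, closed up by `P` back from `x` to
`a`, is a cycle through all of `∂U`.
-/

open Finset

theorem Finset.exists_saturated_subset_card_between {α : Type*} [DecidableEq α]
    (c : α → Finset α) {k : ℕ} (s : Finset α) (hself : ∀ u ∈ s, u ∈ c u)
    (hsub : ∀ u ∈ s, c u ⊆ s) (hblock : ∀ u ∈ s, ∀ v ∈ c u, c v = c u)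
    (hsmall : ∀ u ∈ s, #(c u) ≤ k) (hs : k ≤ 2 * #s) :
    ∃ U ⊆ s, k ≤ 2 * #U ∧ #U ≤ k ∧ ∀ u ∈ U, c u ⊆ U := by
  induction s using Finset.strongInduction with
  | H s ih =>
  by_cases hsk : #s ≤ k
  · exact ⟨s, subset_rfl, hs, hsk, hsub⟩
  obtain ⟨u, hu⟩ : s.Nonempty := card_pos.mp (by omega)
  have hcard : #(s \ c u) + #(c u) = #s := card_sdiff_add_card_eq_card (hsub u hu)
  by_cases hrest : k ≤ 2 * #(s \ c u)
  · have hsub' : ∀ v ∈ s \ c u, c v ⊆ s \ c u := by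
      intro v hv w hw
      obtain ⟨hvs, hvu⟩ := mem_sdiff.mp hv
      refine mem_sdiff.mpr ⟨hsub v hvs hw, fun hwu => hvu ?_⟩
      rw [← (hblock v hvs w hw).symm.trans (hblock u hu w hwu)]
      exact hself v hvs
    obtain ⟨U, hU, hU'⟩ := ih (s \ c u) (sdiff_ssubset (hsub u hu) ⟨u, hself u hu⟩)
      (fun v hv => hself v (mem_sdiff.mp hv).1) hsub'
      (fun v hv => hblock v (mem_sdiff.mp hv).1) (fun v hv => hsmall v (mem_sdiff.mp hv).1) hrest
    exact ⟨U, hU.trans sdiff_subset, hU'⟩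
  · exact ⟨c u, hsub u hu, by omega, hsmall u hu, fun v hv => (hblock u hu v hv).le⟩

namespace SimpleGraph

variable {V : Type*} {G : SimpleGraph V}

namespace Walk

theorem exists_subwalk_from_mem_covering {x : V} {B : Set V} (hB : B.Nonempty) :
    ∀ {r : V} (p : G.Walk r x), B ⊆ {z | z ∈ p.support} →
      ∃ a ∈ B, ∃ q : G.Walk a x, q.IsSubwalk p ∧ B ⊆ {z | z ∈ q.support}
  | _, .nil, hBp => by
    obtain ⟨a, ha⟩ := hB
    obtain rfl : a = x := by simpa using hBp ha
    exact ⟨a, ha, .nil, isSubwalk_rfl _, hBp⟩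
  | r, .cons h p, hBp => by
    by_cases hr : r ∈ B
    · exact ⟨r, hr, _, isSubwalk_rfl _, hBp⟩
    · have hBp' : B ⊆ {z | z ∈ p.support} := fun z hz => by
        have := hBp hz
        simp only [Set.mem_ofPred_eq, support_cons, List.mem_cons] at this
        exact this.resolve_left (ne_of_mem_of_not_mem hz hr)
      obtain ⟨a, ha, q, hqp, hBq⟩ := exists_subwalk_from_mem_covering hB p hBp'
      exact ⟨a, ha, q, hqp.cons h, hBq⟩

theorem ncard_le_length_add_one {u v : V} (p : G.Walk u v) {B : Set V}
    (hB : B ⊆ {z | z ∈ p.support}) : B.ncard ≤ p.length + 1 := by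
  classical
  calc B.ncard ≤ (p.support.toFinset : Set V).ncard := by
        rw [List.coe_toFinset]; exact Set.ncard_le_ncard hB (List.finite_toSet _)
    _ ≤ p.support.length := by rw [Set.ncard_coe_finset]; exact List.toFinset_card_le _
    _ = p.length + 1 := p.length_support

end Walk

def ReachableIn (G : SimpleGraph V) (s : Finset V) (u v : V) : Prop :=
  ∃ p : G.Walk u v, ∀ z ∈ p.support, z ∈ s

namespace ReachableIn

variable {s t : Finset V} {u v w : V}

theorem refl (hu : u ∈ s) : G.ReachableIn s u u := ⟨.nil, by simpa⟩

theorem of_adj (h : G.Adj u v) (hu : u ∈ s) (hv : v ∈ s) : G.ReachableIn s u v :=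
  ⟨h.toWalk, by simp [hu, hv]⟩

theorem mem_right (h : G.ReachableIn s u v) : v ∈ s :=
  let ⟨p, hp⟩ := h; hp v p.end_mem_support

theorem symm (h : G.ReachableIn s u v) : G.ReachableIn s v u :=
  let ⟨p, hp⟩ := h; ⟨p.reverse, by simpa using hp⟩

theorem trans (h₁ : G.ReachableIn s u v) (h₂ : G.ReachableIn s v w) : G.ReachableIn s u w := by
  obtain ⟨p, hp⟩ := h₁
  obtain ⟨q, hq⟩ := h₂
  exact ⟨p.append q, fun z hz => ((Walk.mem_support_append_iff p q).mp hz).elim (hp z) (hq z)⟩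

theorem mono (h : G.ReachableIn s u v) (hst : s ⊆ t) : G.ReachableIn t u v :=
  let ⟨p, hp⟩ := h; ⟨p, fun z hz => hst (hp z hz)⟩

theorem exists_isPath (h : G.ReachableIn s u v) :
    ∃ p : G.Walk u v, p.IsPath ∧ ∀ z ∈ p.support, z ∈ s := by
  classical
  obtain ⟨p, hp⟩ := h
  exact ⟨p.bypass, p.bypass_isPath, fun z hz => hp z (p.support_bypass_subset_support hz)⟩

theorem exists_adj_of_ne [DecidableEq V] (h : G.ReachableIn s u v) (huv : u ≠ v) :
    ∃ y, G.Adj y v ∧ G.ReachableIn (s.erase v) u y := by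
  obtain ⟨p, hp⟩ := h
  induction p with
  | nil => exact absurd rfl huv
  | @cons u w v hadj q ih =>
    have hu : u ∈ s.erase v := mem_erase.mpr ⟨huv, hp u (Walk.start_mem_support _)⟩
    by_cases hwv : w = v
    · subst hwv
      exact ⟨u, hadj, refl hu⟩
    · have hq : ∀ z ∈ q.support, z ∈ s := fun z hz => hp z (by simp [hz])
      obtain ⟨y, hyv, hwy⟩ := ih hwv hq
      exact ⟨y, hyv, (of_adj hadj hu (mem_erase.mpr ⟨hwv, hq w q.start_mem_support⟩)).trans hwy⟩

end ReachableIn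

open Classical in
def componentIn (G : SimpleGraph V) (s : Finset V) (u : V) : Finset V :=
  {v ∈ s | G.ReachableIn s u v}

section componentIn

variable {s U : Finset V} {u v : V}

theorem mem_componentIn : v ∈ G.componentIn s u ↔ v ∈ s ∧ G.ReachableIn s u v := by
  simp [componentIn]

theorem componentIn_subset : G.componentIn s u ⊆ s := fun _ hv => (mem_componentIn.mp hv).1

theorem mem_componentIn_self (hu : u ∈ s) : u ∈ G.componentIn s u :=
  mem_componentIn.mpr ⟨hu, .refl hu⟩

theorem componentIn_eq_of_mem (hv : v ∈ G.componentIn s u) :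
    G.componentIn s v = G.componentIn s u := by
  have huv := (mem_componentIn.mp hv).2
  ext w
  simp only [mem_componentIn]
  exact and_congr_right fun _ => ⟨huv.trans, huv.symm.trans⟩

theorem ReachableIn.componentIn (h : G.ReachableIn s u v) :
    G.ReachableIn (G.componentIn s u) u v := by
  classical
  obtain ⟨p, hp⟩ := h
  refine ⟨p, fun z hz => mem_componentIn.mpr ⟨hp z hz, p.takeUntil z hz, fun y hy => ?_⟩⟩
  exact hp y (p.support_takeUntil_subset_support hz hy)

theorem vertexBoundary_subset_of_saturated (hUs : U ⊆ s)
    (hU : ∀ u ∈ U, G.componentIn s u ⊆ U) : vertexBoundary G U ⊆ vertexBoundary G s := by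
  rintro z ⟨hzU, u, hu, huz⟩
  refine ⟨fun hzs => hzU (hU u hu ?_), u, hUs hu, huz⟩
  exact mem_componentIn.mpr ⟨hzs, .of_adj huz (hUs hu) hzs⟩

theorem vertexBoundary_componentIn_subset :
    vertexBoundary G (G.componentIn s u) ⊆ vertexBoundary G s :=
  vertexBoundary_subset_of_saturated componentIn_subset fun _ hv => (componentIn_eq_of_mem hv).le

end componentIn

variable [DecidableEq V]

/-- `U` hangs off the end `x` of the walk `P`. -/
structure IsPendantSet {r x : V} (P : G.Walk r x) (U : Finset V) : Prop where
  disjoint : ∀ z ∈ P.support, z ∉ U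
  vertexBoundary_subset : vertexBoundary G U ⊆ {z | z ∈ P.support}
  reachableIn : ∀ u ∈ U, G.ReachableIn (insert x U) u x

theorem isPendantSet_componentIn_erase {s : Finset V} {r y : V} (P : G.Walk r y) (hy : y ∈ s)
    (hPC : ∀ z ∈ P.support, z ∈ G.componentIn s y → z = y)
    (hbd : vertexBoundary G (G.componentIn s y) ⊆ {z | z ∈ P.support}) :
    IsPendantSet P ((G.componentIn s y).erase y) where
  disjoint z hz hzC := (mem_erase.mp hzC).1 (hPC z hz (mem_of_mem_erase hzC))
  vertexBoundary_subset := by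
    rintro z ⟨hzC, c, hc, hcz⟩
    by_cases hzy : z = y
    · exact hzy ▸ P.end_mem_support
    · exact hbd ⟨fun hz => hzC (mem_erase.mpr ⟨hzy, hz⟩), c, mem_of_mem_erase hc, hcz⟩
  reachableIn u hu := by
    rw [insert_erase (mem_componentIn_self hy)]
    exact (mem_componentIn.mp (mem_of_mem_erase hu)).2.componentIn.symm

theorem IsPendantSet.exists_card_between {k : ℕ} {r x : V} {P : G.Walk r x} {W : Finset V}
    (hP : P.IsPath) (hW : IsPendantSet P W) (hk : k ≤ #W) :
    ∃ (y : V) (Q : G.Walk r y) (U : Finset V),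
      Q.IsPath ∧ IsPendantSet Q U ∧ k ≤ 2 * #U ∧ #U ≤ k := by
  have hxW : x ∉ W := hW.disjoint x P.end_mem_support
  have hnbr : ∀ u ∈ W, ∃ y, G.Adj y x ∧ G.ReachableIn W u y := fun u hu => by
    simpa [erase_insert hxW] using
      (hW.reachableIn u hu).exists_adj_of_ne (ne_of_mem_of_not_mem hu hxW)
  by_cases hbig : ∃ u ∈ W, k < #(G.componentIn W u)
  · obtain ⟨u, hu, hku⟩ := hbig
    obtain ⟨y, hyx, huy⟩ := hnbr u hu
    have hyW : y ∈ W := huy.mem_right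
    have hC : G.componentIn W y = G.componentIn W u :=
      componentIn_eq_of_mem (mem_componentIn.mpr ⟨hyW, huy⟩)
    have hyP : y ∉ P.support := fun h => hW.disjoint y h hyW
    have hQ : IsPendantSet (P.concat hyx.symm) ((G.componentIn W y).erase y) := by
      refine isPendantSet_componentIn_erase _ hyW (fun z hz hzC => ?_) fun z hz => ?_
      · rw [Walk.support_concat, List.mem_append, List.mem_singleton] at hz
        exact hz.resolve_left fun hzP => hW.disjoint z hzP (componentIn_subset hzC)
      · have := hW.vertexBoundary_subset (vertexBoundary_componentIn_subset hz)
        simp only [Set.mem_ofPred_eq, Walk.support_concat, List.mem_append] at this ⊢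
        exact Or.inl this
    have hcard : #((G.componentIn W y).erase y) < #W := by
      calc #((G.componentIn W y).erase y) < #(G.componentIn W y) :=
            card_erase_lt_of_mem (mem_componentIn_self hyW)
        _ ≤ #W := card_le_card componentIn_subset
    exact hQ.exists_card_between (hP.concat hyP hyx.symm)
      (by rw [card_erase_of_mem (mem_componentIn_self hyW), hC]; omega)
  · push Not at hbig
    obtain ⟨U, hUW, hkU, hUk, hUsat⟩ := exists_saturated_subset_card_between (G.componentIn W) W
      (fun _ => mem_componentIn_self) (fun _ _ => componentIn_subset)
      (fun _ _ _ => componentIn_eq_of_mem) hbig (by omega)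
    refine ⟨x, P, U, hP, ⟨fun z hz hzU => hW.disjoint z hz (hUW hzU),
      (vertexBoundary_subset_of_saturated hUW hUsat).trans hW.vertexBoundary_subset,
      fun u hu => ?_⟩, hkU, hUk⟩
    obtain ⟨y, hyx, huy⟩ := hnbr u (hUW hu)
    have hyU : y ∈ U := hUsat u hu (mem_componentIn.mpr ⟨huy.mem_right, huy⟩)
    exact (huy.componentIn.mono ((hUsat u hu).trans (subset_insert x U))).trans
      (.of_adj hyx (mem_insert_of_mem hyU) (mem_insert_self x U))
termination_by #W

theorem IsPendantSet.exists_isCycle {r x : V} {P : G.Walk r x} {U : Finset V} (hP : P.IsPath)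
    (hU : IsPendantSet P U) (h2 : 2 ≤ (vertexBoundary G U).ncard) :
    ∃ (v : V) (c : G.Walk v v), c.IsCycle ∧ (vertexBoundary G U).ncard + 1 ≤ c.length := by
  obtain ⟨a, haB, R, hRP, hBR⟩ := P.exists_subwalk_from_mem_covering
    (Set.nonempty_of_ncard_ne_zero (by omega)) hU.vertexBoundary_subset
  have hR : R.IsPath := Walk.isPath_of_isSubwalk hRP hP
  have hBlen := R.ncard_le_length_add_one hBR
  obtain ⟨haU, u, huU, hua⟩ := haB
  obtain ⟨Q, hQ, hQU⟩ := (hU.reachableIn u huU).exists_isPath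
  have hRU : ∀ z ∈ R.support, z ∉ U := fun z hz => hU.disjoint z (hRP.support_subset hz)
  have hux : u ≠ x := fun h => hRU x R.end_mem_support (h ▸ huU)
  have hax : a ≠ x := by
    rintro rfl
    have := (Walk.isPath_iff_nil.mp hR).length_eq_zero
    omega
  have hQlen : Q.length ≠ 0 := fun h => hux (Walk.eq_of_length_eq_zero h)
  have hxR : x ∉ R.reverse.support.tail := by
    have := hR.reverse.support_nodup
    rw [← Walk.cons_tail_support] at this
    exact (List.nodup_cons.mp this).1
  refine ⟨x, R.reverse.append (Q.cons hua.symm), ?_, ?_⟩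
  · refine hR.reverse.isCycle_append ((Walk.cons_isPath_iff _ _).mpr ⟨hQ, fun haQ => ?_⟩)
      (fun z hzR hzQ => ?_) (Or.inr (by simp only [Walk.length_cons]; omega))
    · rcases mem_insert.mp (hQU a haQ) with h | h
      exacts [hax h, haU h]
    · rw [Walk.support_cons, List.tail_cons] at hzQ
      rcases mem_insert.mp (hQU z hzQ) with rfl | h
      · exact hxR hzR
      · exact hRU z (by simpa using List.mem_of_mem_tail hzR) h
  · simp only [Walk.length_append, Walk.length_reverse, Walk.length_cons]
    omega

theorem exists_card_componentIn_univ_gt [Fintype V] {k : ℕ} (hV : k < Fintype.card V)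
    (h : ∀ U : Finset V, k ≤ 2 * #U → #U ≤ k → (vertexBoundary G U).Nonempty) :
    ∃ r, k < #(G.componentIn univ r) := by
  by_contra! hsmall
  obtain ⟨U, -, hkU, hUk, hUsat⟩ := exists_saturated_subset_card_between (G.componentIn univ) univ
    (fun _ => mem_componentIn_self) (fun _ _ => componentIn_subset)
    (fun _ _ _ => componentIn_eq_of_mem) (fun u _ => hsmall u) (by rw [card_univ]; omega)
  obtain ⟨z, hz⟩ := h U hkU hUk
  exact (vertexBoundary_subset_of_saturated (subset_univ U) hUsat hz).1 (by simp)

end SimpleGraph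

open SimpleGraph in
theorem cycle_from_expansion_general {V : Type*} [Fintype V] (G : SimpleGraph V) (k t : ℕ)
    (ht : 2 ≤ t) (hV : k < Fintype.card V)
    (h : ∀ W : Set V, (k : ℝ) / 2 ≤ (W.ncard : ℝ) → W.ncard ≤ k →
      t ≤ (vertexBoundary G W).ncard) :
    ∃ (v : V) (w : G.Walk v v), w.IsCycle ∧ t + 1 ≤ w.length := by
  classical
  have hexp : ∀ U : Finset V, k ≤ 2 * #U → #U ≤ k → t ≤ (vertexBoundary G U).ncard := by
    intro U hkU hUk
    refine h U ?_ (by rwa [Set.ncard_coe_finset])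
    rw [Set.ncard_coe_finset, div_le_iff₀ two_pos]
    exact_mod_cast (by omega : k ≤ #U * 2)
  obtain ⟨r, hr⟩ := exists_card_componentIn_univ_gt (G := G) hV fun U hkU hUk =>
    Set.nonempty_of_ncard_ne_zero (by have := hexp U hkU hUk; omega)
  have hW : IsPendantSet (.nil : G.Walk r r) ((G.componentIn univ r).erase r) :=
    isPendantSet_componentIn_erase _ (mem_univ r) (by simp)
      (vertexBoundary_componentIn_subset.trans fun z hz => absurd (mem_univ z) hz.1)
  obtain ⟨x, P, U, hP, hU, hkU, hUk⟩ := hW.exists_card_between (k := k) .nil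
    (by rw [card_erase_of_mem (mem_componentIn_self (mem_univ r))]; omega)
  have hbd := hexp U hkU hUk
  obtain ⟨v, c, hc, hlen⟩ := hU.exists_isCycle hP (ht.trans hbd)
  exact ⟨v, c, hc, by omega⟩

/-- a graph on more than `k` vertices in which every vertex set `W` with
`k/2 ≤ |W| ≤ k` has vertex boundary of size at least `t` contains a cycle of length at
least `t + 1`. -/
theorem cycle_from_expansion {V : Type*} [Fintype V] (G : SimpleGraph V) (k t : ℕ)
    (hk : 1 ≤ k) (ht : 2 ≤ t) (hV : k < Fintype.card V)
    (h : ∀ W : Set V, (k : ℝ) / 2 ≤ (W.ncard : ℝ) → W.ncard ≤ k →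
      t ≤ (vertexBoundary G W).ncard) :
    ∃ (v : V) (w : G.Walk v v), w.IsCycle ∧ t + 1 ≤ w.length :=
  cycle_from_expansion_general G k t ht hV h

end
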